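/- Let E be a finite nonempty linearly ordered set and I an irreflexive symmetric relation on E. Consider the two pointed M(E,I)-sets on the pointed set {x_0, x_1, *}: 𝔏, in which x_0·e = x_1, x_1·e = * and *·e = * for every e ∈ E, and 𝔑, in which x_0·e = *, x_1·e = * and *·e = * for every e ∈ E. Then for every s ≥ 0 there is an isomorphism of abelian groups H_s(A(𝔏)) ≅ H_s(A(𝔑)); in particular, for s ≥ 1 both are isomorphic to (H_s(K(E,I)))^2 ⊕ ℤ^{p_s}. -/

import Mathlib

/-!
Common setup: free partially commutative monoid `M(E,I)` data, cliques of the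
commutation relation, the augmented clique chain complex `K(E,I)`, the chain
complexes `A(X^•)` and `B(X^•)` of a pointed `M(E,I)`-set, and their homology.

A pointed `M(E,I)`-set with underlying non-base part `X` is modelled as an
action `act : Option X → E → Option X`, where `none` is the base point `*`.
-/

namespace PCMHomology

variable {E : Type*} [LinearOrder E] [Fintype E]

/-- `S` is a clique for the relation `I`: distinct elements pairwise satisfy `I`. -/
def IsClique (I : E → E → Prop) (S : Finset E) : Prop :=
  ∀ a ∈ S, ∀ b ∈ S, a ≠ b → I a b

/-- The type of `s`-cliques: `s`-element subsets of `E` whose elements pairwise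
commute (satisfy `I`). -/
def Clique (I : E → E → Prop) (s : ℕ) : Type _ :=
  {S : Finset E // S.card = s ∧ IsClique I S}

/-- `p_s`, the number of `s`-cliques. -/
noncomputable def pClique (I : E → E → Prop) (s : ℕ) : ℕ :=
  Nat.card (Clique I s)

/-- Removing an element of an `(s+1)`-clique yields an `s`-clique. -/
def faceClique {I : E → E → Prop} {s : ℕ} (S : Clique I (s + 1))
    (e : {a // a ∈ S.val}) : Clique I s :=
  ⟨S.val.erase e.val, by
    refine ⟨?_, ?_⟩
    · rw [Finset.card_erase_of_mem e.property, S.property.1]; rfl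
    · intro a ha b hb hab
      exact S.property.2 a (Finset.mem_of_mem_erase ha) b
        (Finset.mem_of_mem_erase hb) hab⟩

/-- If `e` is the `k`-th element of the clique `S = {e_1 < ⋯ < e_{s+1}}` then
`posIdx S e = k - 1`, the number of elements of `S` smaller than `e`. -/
def posIdx {I : E → E → Prop} {s : ℕ} (S : Clique I (s + 1))
    (e : {a // a ∈ S.val}) : ℕ :=
  (S.val.filter (fun a => a < e.val)).card

/-- Degree-`s` component of the augmented clique chain complex `K(E,I)`:
the free abelian group on the `s`-cliques. -/
abbrev KC (I : E → E → Prop) (s : ℕ) : Type _ := Clique I s →₀ ℤ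

/-- The differential of `K(E,I)`:
`d (e_1,…,e_{s+1}) = ∑ (-1)^(k+1) (e_1,…,ê_k,…,e_{s+1})`. -/
noncomputable def Kd (I : E → E → Prop) (s : ℕ) : KC I (s + 1) →+ KC I s :=
  Finsupp.liftAddHom fun S => zmultiplesHom _
    (∑ e ∈ S.val.attach,
      ((-1 : ℤ) ^ posIdx S e) • Finsupp.single (faceClique S e) (1 : ℤ))

/-- Degree-`s` component of the chain complex `A(X^•)`: the free abelian group
on pairs `(x, S)` with `x ∈ X^•` (including the base point `* = none`) and `S`
an `s`-clique. -/
abbrev AC (I : E → E → Prop) (X : Type*) (s : ℕ) : Type _ :=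
  (Option X × Clique I s) →₀ ℤ

/-- The differential of `A(X^•)`:
`d (x; e_1,…,e_{s+1}) = ∑ (-1)^k ((x·e_k; …ê_k…) - (x; …ê_k…))`. -/
noncomputable def Ad (I : E → E → Prop) {X : Type*}
    (act : Option X → E → Option X) (s : ℕ) : AC I X (s + 1) →+ AC I X s :=
  Finsupp.liftAddHom fun p => zmultiplesHom _
    (∑ e ∈ p.2.val.attach, ((-1 : ℤ) ^ (posIdx p.2 e + 1)) •
      (Finsupp.single (act p.1 e.val, faceClique p.2 e) (1 : ℤ)
        - Finsupp.single (p.1, faceClique p.2 e) (1 : ℤ)))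

/-- Degree-`s` component of the chain complex `B(X^•)`: the free abelian group
on pairs `(x, S)` with `x ∈ X` (so `x ≠ *`) and `S` an `s`-clique. -/
abbrev BC (I : E → E → Prop) (X : Type*) (s : ℕ) : Type _ :=
  (X × Clique I s) →₀ ℤ

/-- The generator `(x·e; T)` of `B(X^•)`, interpreted as `0` when `x·e = *`. -/
noncomputable def bGen {I : E → E → Prop} {X : Type*} {s : ℕ} (o : Option X) (T : Clique I s) :
    BC I X s :=
  o.elim 0 (fun y => Finsupp.single (y, T) (1 : ℤ))

/-- The differential of `B(X^•)`:
`d (x; e_1,…,e_{s+1}) = ∑ (-1)^k ((x·e_k; …ê_k…) - (x; …ê_k…))`, with a term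
`(x·e_k; T)` interpreted as `0` when `x·e_k = *`. -/
noncomputable def Bd (I : E → E → Prop) {X : Type*}
    (act : Option X → E → Option X) (s : ℕ) : BC I X (s + 1) →+ BC I X s :=
  Finsupp.liftAddHom fun p => zmultiplesHom _
    (∑ e ∈ p.2.val.attach, ((-1 : ℤ) ^ (posIdx p.2 e + 1)) •
      (bGen (act (some p.1) e.val) (faceClique p.2 e)
        - Finsupp.single (p.1, faceClique p.2 e) (1 : ℤ)))

/-- Homology at `C1` of `C2 -d2→ C1 -d1→ C0`: the kernel of `d1` modulo (its
intersection with) the image of `d2`. -/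
abbrev homologyOf {C2 C1 C0 : Type*} [AddCommGroup C2] [AddCommGroup C1]
    [AddCommGroup C0] (d1 : C1 →+ C0) (d2 : C2 →+ C1) : Type _ :=
  d1.ker ⧸ ((d2.range).addSubgroupOf d1.ker)

/-- The homology groups of a nonnegatively graded chain complex `(C, d)`;
in degree `0` this is `C 0 / im (d 0)`. -/
def Hmlgy (C : ℕ → Type*) [∀ n, AddCommGroup (C n)]
    (d : ∀ n, C (n + 1) →+ C n) : ℕ → Type _
  | 0 => homologyOf (0 : C 0 →+ PUnit.{1}) (d 0)
  | (s + 1) => homologyOf (d s) (d (s + 1))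

instance hmlgyAddCommGroup (C : ℕ → Type*) [∀ n, AddCommGroup (C n)]
    (d : ∀ n, C (n + 1) →+ C n) : ∀ s, AddCommGroup (Hmlgy C d s)
  | 0 => inferInstanceAs (AddCommGroup (homologyOf (0 : C 0 →+ PUnit.{1}) (d 0)))
  | (s + 1) => inferInstanceAs (AddCommGroup (homologyOf (d s) (d (s + 1))))

end PCMHomology

namespace PCMHomology

/-- The pointed `M(E,I)`-set `𝔏` on `{x₀, x₁, *}` (with `X = Fin 2`,
`x₀ = 0`, `x₁ = 1`): `x₀·e = x₁`, `x₁·e = *`, `*·e = *` for every `e ∈ E`. -/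
def actL (E : Type*) : Option (Fin 2) → E → Option (Fin 2) :=
  fun o _ => o.bind (fun x => if x = 0 then some 1 else none)

/-- The pointed `M(E,I)`-set `𝔑` on `{x₀, x₁, *}` (with `X = Fin 2`):
`x₀·e = *`, `x₁·e = *`, `*·e = *` for every `e ∈ E`. -/
def actN (E : Type*) : Option (Fin 2) → E → Option (Fin 2) :=
  fun _ _ => none

/-!
Both actions are independent of the letter `e`: writing `f` for the induced self-map of `X^•`,
the differential of `A(X^•) = K ⊗ ℤ[X^•]` is `Kd ⊗ (1 - f_*)`. In the coordinates
`(a₀, a₁, a_* + a₀ + a₁)` of the three points this splits `A(𝔑)` as `K ⊕ K ⊕ K'`, where `K'` is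
`K` with zero differential. For `𝔏` the map `f` also sends `x₀` to `x₁`, which adds `-Kd a₀` to the
`a₁`-coordinate of the differential; replacing `a₁` by `a₁ - s • a₀` in degree `s` absorbs it and
gives the same splitting. Hence in positive degrees both homologies are `H_s(K)² ⊕ K_s`.
-/

section Homology

variable {C₂ C₁ C₀ C₂' C₁' C₀' : Type*} [AddCommGroup C₂] [AddCommGroup C₁] [AddCommGroup C₀]
  [AddCommGroup C₂'] [AddCommGroup C₁'] [AddCommGroup C₀']

noncomputable def homologyOfCongr {d₁ : C₁ →+ C₀} {d₂ : C₂ →+ C₁} {d₁' : C₁' →+ C₀'}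
    {d₂' : C₂' →+ C₁'} (e₂ : C₂ ≃+ C₂') (e₁ : C₁ ≃+ C₁') (e₀ : C₀ ≃+ C₀')
    (h₁ : ∀ x, e₀ (d₁ x) = d₁' (e₁ x)) (h₂ : ∀ x, e₁ (d₂ x) = d₂' (e₂ x)) :
    homologyOf d₁ d₂ ≃+ homologyOf d₁' d₂' :=
  have hker : d₁.ker.map (e₁ : C₁ →+ C₁') = d₁'.ker := by
    rw [AddSubgroup.map_equiv_eq_comap_symm]
    ext y
    simp [AddMonoidHom.mem_ker, ← e₀.map_eq_zero_iff, h₁]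
  QuotientAddGroup.congr _ _ ((e₁.addSubgroupMap d₁.ker).trans (AddEquiv.addSubgroupCongr hker)) <| by
    rw [AddSubgroup.map_equiv_eq_comap_symm]
    ext ⟨y, hy⟩
    simp only [AddSubgroup.mem_comap, AddSubgroup.mem_addSubgroupOf, AddMonoidHom.mem_range]
    constructor
    · rintro ⟨x, hx⟩
      exact ⟨e₂ x, by rw [← h₂, hx]; simp⟩
    · rintro ⟨x, hx⟩
      exact ⟨e₂.symm x, e₁.injective (by rw [h₂]; simpa using hx)⟩

noncomputable def hmlgyCongr {C C' : ℕ → Type*} [∀ n, AddCommGroup (C n)]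
    [∀ n, AddCommGroup (C' n)] {d : ∀ n, C (n + 1) →+ C n} {d' : ∀ n, C' (n + 1) →+ C' n}
    (e : ∀ n, C n ≃+ C' n) (he : ∀ n x, e n (d n x) = d' n (e (n + 1) x)) :
    ∀ s, Hmlgy C d s ≃+ Hmlgy C' d' s
  | 0 => homologyOfCongr (e 1) (e 0) (AddEquiv.refl PUnit) (fun _ => rfl) (he 0)
  | s + 1 => homologyOfCongr (e (s + 2)) (e (s + 1)) (e s) (he s) (he (s + 1))

noncomputable def homologyOfProdMap {B₂ B₁ B₀ : Type*} [AddCommGroup B₂] [AddCommGroup B₁]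
    [AddCommGroup B₀] (f₁ : B₁ →+ B₀) (f₂ : B₂ →+ B₁) (g₁ : C₁ →+ C₀) (g₂ : C₂ →+ C₁) :
    homologyOf (f₁.prodMap g₁) (f₂.prodMap g₂) ≃+ homologyOf f₁ f₂ × homologyOf g₁ g₂ :=
  (QuotientAddGroup.congr _ _
    ((AddEquiv.addSubgroupCongr (AddMonoidHom.ker_prodMap f₁ g₁)).trans
      (AddSubgroup.prodEquiv _ _)) <| by
    rw [AddSubgroup.map_equiv_eq_comap_symm]
    ext ⟨⟨y, hy⟩, ⟨z, hz⟩⟩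
    simp only [AddSubgroup.mem_comap, AddSubgroup.mem_addSubgroupOf, AddMonoidHom.range_prodMap]
    exact Iff.rfl).trans
  (QuotientAddGroup.prodAddEquiv _ _)

noncomputable def homologyOfZero : homologyOf (0 : C₁ →+ C₀) (0 : C₂ →+ C₁) ≃+ C₁ :=
  ((QuotientAddGroup.quotientAddEquivOfEq (by ext; simp)).trans QuotientAddGroup.quotientBot).trans
    ((AddEquiv.addSubgroupCongr AddMonoidHom.ker_zero).trans AddSubgroup.topEquiv)

end Homology

def twistEquiv {M : Type*} [AddCommGroup M] (c : ℤ) : (Option (Fin 2) → M) ≃+ M × M × M where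
  toFun v := (v (some 0), v (some 1) - c • v (some 0), v none + v (some 0) + v (some 1))
  invFun y := fun o => o.elim (y.2.2 - y.1 - (y.2.1 + c • y.1)) ![y.1, y.2.1 + c • y.1]
  left_inv v := by
    funext o
    rcases o with _ | i
    · simp; abel
    · fin_cases i <;> simp
  right_inv y := by ext <;> simp; abel
  map_add' v w := by ext <;> simp [smul_add] <;> abel

section Coordinates

variable {E : Type*} {I : E → E → Prop} {X : Type*}

noncomputable def coeff (o : Option X) (s : ℕ) : AC I X s →+ KC I s :=
  (Finsupp.applyAddHom o).comp Finsupp.curryAddEquiv.toAddMonoidHom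

lemma coeff_single [DecidableEq X] (o : Option X) {s : ℕ} (p : Option X) (S : Clique I s) (n : ℤ) :
    coeff o s (Finsupp.single (p, S) n) = if p = o then Finsupp.single S n else 0 := by
  simp [coeff, Finsupp.curry_single, Finsupp.single_apply]

abbrev DC (I : E → E → Prop) (s : ℕ) : Type _ := KC I s × KC I s × KC I s

noncomputable def coordEquiv (c : ℤ) (s : ℕ) : AC I (Fin 2) s ≃+ DC I s :=
  Finsupp.curryAddEquiv.trans
    ((Finsupp.linearEquivFunOnFinite ℤ (KC I s) (Option (Fin 2))).toAddEquiv.trans (twistEquiv c))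

lemma coordEquiv_apply (c : ℤ) (s : ℕ) (x : AC I (Fin 2) s) :
    coordEquiv c s x = (coeff (some 0) s x, coeff (some 1) s x - c • coeff (some 0) s x,
      coeff none s x + coeff (some 0) s x + coeff (some 1) s x) := rfl

instance Clique.finite [Finite E] (I : E → E → Prop) (s : ℕ) : Finite (Clique I s) :=
  inferInstanceAs (Finite {S : Finset E // S.card = s ∧ IsClique I S})

noncomputable def KC.equivFun [Finite E] (I : E → E → Prop) (s : ℕ) :
    KC I s ≃+ (Fin (pClique I s) → ℤ) :=
  (Finsupp.domCongr (Finite.equivFin (Clique I s))).trans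
    (Finsupp.linearEquivFunOnFinite ℤ ℤ _).toAddEquiv

end Coordinates

section Differentials

variable {E : Type*} [LinearOrder E] {I : E → E → Prop}

lemma Kd_single (s : ℕ) (S : Clique I (s + 1)) :
    Kd I s (Finsupp.single S 1) =
      ∑ e ∈ S.val.attach, ((-1 : ℤ) ^ posIdx S e) • Finsupp.single (faceClique S e) 1 := by
  simp [Kd]

lemma Ad_single {X : Type*} (act : Option X → E → Option X) (s : ℕ)
    (p : Option X × Clique I (s + 1)) :
    Ad I act s (Finsupp.single p 1) =
      ∑ e ∈ p.2.val.attach, ((-1 : ℤ) ^ (posIdx p.2 e + 1)) •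
        (Finsupp.single (act p.1 e.val, faceClique p.2 e) 1
          - Finsupp.single (p.1, faceClique p.2 e) 1) := by
  simp [Ad]

open Finset in
lemma coeff_Ad_of_const {X : Type*} [Fintype X] [DecidableEq X] {act : Option X → E → Option X}
    {f : Option X → Option X} (hact : ∀ o e, act o e = f o) (s : ℕ) (x : AC I X (s + 1))
    (o : Option X) :
    coeff o s (Ad I act s x) =
      Kd I s (coeff o (s + 1) x) - ∑ o' ∈ univ.filter (f · = o), Kd I s (coeff o' (s + 1) x) := by
  induction x using Finsupp.induction_linear with
  | zero => simp
  | add x y hx hy => simp only [map_add, hx, hy, sum_add_distrib]; abel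
  | single p n =>
    obtain ⟨q, S⟩ := p
    rw [← Finsupp.smul_single_one]
    simp only [map_zsmul, ← smul_sum, ← smul_sub]
    congr 1
    simp only [Ad_single, hact, map_sum, map_zsmul, map_sub, coeff_single, apply_ite (Kd I s),
      map_zero, sum_ite_eq, mem_filter, mem_univ, true_and, Kd_single]
    split_ifs <;> simp_all [pow_succ, ← sum_neg_distrib]

noncomputable def Dd (I : E → E → Prop) (s : ℕ) : DC I (s + 1) →+ DC I s :=
  (Kd I s).prodMap ((Kd I s).prodMap 0)

lemma coordEquiv_Ad_actN (c : ℤ) {s : ℕ} (x : AC I (Fin 2) (s + 1)) :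
    coordEquiv c s (Ad I (actN E) s x) = Dd I s (coordEquiv c (s + 1) x) := by
  simp [coordEquiv_apply, coeff_Ad_of_const (act := actN E) (f := fun _ => none) (fun _ _ => rfl),
    Dd]

lemma coordEquiv_Ad_actL (c : ℤ) {s : ℕ} (x : AC I (Fin 2) (s + 1)) :
    coordEquiv c s (Ad I (actL E) s x) = Dd I s (coordEquiv (c + 1) (s + 1) x) := by
  simp [coordEquiv_apply, coeff_Ad_of_const (act := actL E)
    (f := fun o => o.bind fun x => if x = 0 then some 1 else none) (fun _ _ => rfl), Dd,
    Finset.sum_filter]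
  module

noncomputable def hmlgyDCSuccEquiv [Finite E] (t : ℕ) :
    Hmlgy (DC I) (Dd I) (t + 1) ≃+
      (Fin 2 → Hmlgy (KC I) (Kd I) (t + 1)) × (Fin (pClique I (t + 1)) → ℤ) :=
  (homologyOfProdMap _ _ _ _).trans <|
    (AddEquiv.prodCongr (AddEquiv.refl _)
      ((homologyOfProdMap _ _ _ _).trans
        (AddEquiv.prodCongr (AddEquiv.refl _) (homologyOfZero.trans (KC.equivFun I _))))).trans <|
    AddEquiv.prodAssoc.symm.trans
      (AddEquiv.prodCongr (LinearEquiv.finTwoArrow ℤ _).toAddEquiv.symm (AddEquiv.refl _))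

end Differentials

theorem stmt10_general {E : Type*} [LinearOrder E] [Fintype E]
    (I : E → E → Prop) :
    (∀ s : ℕ, Nonempty
      (Hmlgy (AC I (Fin 2)) (Ad I (actL E)) s ≃+
        Hmlgy (AC I (Fin 2)) (Ad I (actN E)) s)) ∧
    (∀ s : ℕ, 1 ≤ s → Nonempty
      (Hmlgy (AC I (Fin 2)) (Ad I (actL E)) s ≃+
        (Fin 2 → Hmlgy (KC I) (Kd I) s) × (Fin (pClique I s) → ℤ))) ∧
    (∀ s : ℕ, 1 ≤ s → Nonempty
      (Hmlgy (AC I (Fin 2)) (Ad I (actN E)) s ≃+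
        (Fin 2 → Hmlgy (KC I) (Kd I) s) × (Fin (pClique I s) → ℤ))) := by
  have eL : ∀ s, Hmlgy (AC I (Fin 2)) (Ad I (actL E)) s ≃+ Hmlgy (DC I) (Dd I) s :=
    hmlgyCongr (fun n => coordEquiv n n) fun n x => by
      rw [Nat.cast_succ]; exact coordEquiv_Ad_actL _ x
  have eN : ∀ s, Hmlgy (AC I (Fin 2)) (Ad I (actN E)) s ≃+ Hmlgy (DC I) (Dd I) s :=
    hmlgyCongr (fun n => coordEquiv 0 n) fun _ x => coordEquiv_Ad_actN 0 x
  refine ⟨fun s => ⟨(eL s).trans (eN s).symm⟩, fun s hs => ?_, fun s hs => ?_⟩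
  all_goals obtain ⟨t, rfl⟩ := Nat.exists_eq_add_of_le' hs
  · exact ⟨(eL _).trans (hmlgyDCSuccEquiv t)⟩
  · exact ⟨(eN _).trans (hmlgyDCSuccEquiv t)⟩

/-- For the two pointed `M(E,I)`-sets `𝔏` and `𝔑` on
`{x₀, x₁, *}` above, `H_s(A(𝔏)) ≅ H_s(A(𝔑))` for every `s ≥ 0`; in
particular, for `s ≥ 1` both are isomorphic to
`(H_s(K(E,I)))² ⊕ ℤ^{p_s}`. -/
theorem stmt10 {E : Type*} [LinearOrder E] [Fintype E] [Nonempty E]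
    (I : E → E → Prop) (hirr : ∀ e, ¬ I e e) (hsym : ∀ e e', I e e' → I e' e) :
    (∀ s : ℕ, Nonempty
      (Hmlgy (AC I (Fin 2)) (Ad I (actL E)) s ≃+
        Hmlgy (AC I (Fin 2)) (Ad I (actN E)) s)) ∧
    (∀ s : ℕ, 1 ≤ s → Nonempty
      (Hmlgy (AC I (Fin 2)) (Ad I (actL E)) s ≃+
        (Fin 2 → Hmlgy (KC I) (Kd I) s) × (Fin (pClique I s) → ℤ))) ∧
    (∀ s : ℕ, 1 ≤ s → Nonempty
      (Hmlgy (AC I (Fin 2)) (Ad I (actN E)) s ≃+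
        (Fin 2 → Hmlgy (KC I) (Kd I) s) × (Fin (pClique I s) → ℤ))) :=
  stmt10_general I

end PCMHomology
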